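/- arXiv:2310.09646 — 2 statements merged into one kernel-verified Lean document; each statement's English description precedes it below -/
import Mathlib

section
/- The energy distance between two probability distributions on ℝ^d is nonnegative: 2E‖X−Y‖ − E‖X−X'‖ − E‖Y−Y'‖ ≥ 0, where X, X' are i.i.d. from F, Y, Y' are i.i.d. from G, and all four random vectors are independent, assuming E‖X‖ < ∞ and E‖Y‖ < ∞. -/
/-!
In one dimension `|a - b| = ∫ (1[a ≤ t < b] + 1[b ≤ t < a]) dt`, so by Tonelli
`E|X - Y| = ∫ (F(t) (1 - G(t)) + G(t) (1 - F(t))) dt` in terms of the distribution functions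
`F`, `G`, and the energy distance becomes `2 ∫ (F - G)² ≥ 0`. In higher dimension the Euclidean
norm is an average of one-dimensional ones: by rotation invariance
`∫_{‖u‖ < 1} |⟪u, v⟫| du = c ‖v‖` with `0 < c < ∞`, and the one-dimensional inequality for the
projections `⟪u, X⟫` integrates to the claim. Everything is done with lower Lebesgue integrals,
so integrability only enters when passing back to real expectations.
-/

open MeasureTheory ProbabilityTheory Set
open scoped ENNReal RealInnerProductSpace

lemma enorm_sub_eq_volume_Ico_add (a b : ℝ) :
    ‖a - b‖ₑ = volume (Ico a b) + volume (Ico b a) := by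
  rw [Real.volume_Ico, Real.volume_Ico, ← ofReal_norm, Real.norm_eq_abs]
  rcases le_total a b with h | h
  · rw [abs_sub_comm, abs_of_nonneg (sub_nonneg.2 h), ENNReal.ofReal_of_nonpos (sub_nonpos.2 h),
      add_zero]
  · rw [abs_of_nonneg (sub_nonneg.2 h), ENNReal.ofReal_of_nonpos (sub_nonpos.2 h), zero_add]

lemma lintegral_volume_Ico_prod {α β : Type*} [MeasurableSpace α] [MeasurableSpace β]
    {σ : Measure α} {τ : Measure β} [SFinite σ] [SFinite τ] {f : α → ℝ} {g : β → ℝ}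
    (hf : Measurable f) (hg : Measurable g) :
    ∫⁻ p, volume (Ico (f p.1) (g p.2)) ∂(σ.prod τ)
      = ∫⁻ t, σ {x | f x ≤ t} * τ {y | t < g y} := by
  have hS : MeasurableSet {q : (α × β) × ℝ | f q.1.1 ≤ q.2 ∧ q.2 < g q.1.2} :=
    (measurableSet_le (hf.comp measurable_fst.fst) measurable_snd).inter
      (measurableSet_lt measurable_snd (hg.comp measurable_fst.snd))
  calc ∫⁻ p, volume (Ico (f p.1) (g p.2)) ∂(σ.prod τ)
      = ((σ.prod τ).prod volume) {q | f q.1.1 ≤ q.2 ∧ q.2 < g q.1.2} :=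
        (Measure.prod_apply hS).symm
    _ = ∫⁻ t, (σ.prod τ) ({x | f x ≤ t} ×ˢ {y | t < g y}) := Measure.prod_apply_symm hS
    _ = _ := by simp_rw [Measure.prod_prod]

/-- The difference of the two sides is `2 (x - y)²`. -/
lemma mul_add_mul_le_two_mul_of_add_eq_one {x x' y y' : ℝ≥0∞} (hx : x + x' = 1)
    (hy : y + y' = 1) :
    x * x' + x * x' + (y * y' + y * y') ≤ 2 * (x * y' + y * x') := by
  lift x to NNReal using ne_top_of_le_ne_top ENNReal.one_ne_top (hx ▸ le_self_add)
  lift x' to NNReal using ne_top_of_le_ne_top ENNReal.one_ne_top (hx ▸ le_add_self)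
  lift y to NNReal using ne_top_of_le_ne_top ENNReal.one_ne_top (hy ▸ le_self_add)
  lift y' to NNReal using ne_top_of_le_ne_top ENNReal.one_ne_top (hy ▸ le_add_self)
  have hx : (x : ℝ) + x' = 1 := by exact_mod_cast hx
  have hy : (y : ℝ) + y' = 1 := by exact_mod_cast hy
  have : (x : ℝ) * x' + x * x' + (y * y' + y * y') ≤ 2 * (x * y' + y * x') := by
    nlinarith [sq_nonneg ((x : ℝ) - y)]
  exact_mod_cast this

lemma lintegral_enorm_sub_comp_prod {α : Type*} [MeasurableSpace α] {σ τ : Measure α}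
    [SFinite σ] [SFinite τ] {f : α → ℝ} (hf : Measurable f) :
    ∫⁻ p, ‖f p.1 - f p.2‖ₑ ∂(σ.prod τ)
      = ∫⁻ t, σ {x | f x ≤ t} * τ {x | t < f x} + τ {x | f x ≤ t} * σ {x | t < f x} := by
  have hIco : Measurable fun p : α × α => volume (Ico (f p.1) (f p.2)) := by
    simp_rw [Real.volume_Ico]
    exact ((hf.comp measurable_snd).sub (hf.comp measurable_fst)).ennreal_ofReal
  simp_rw [enorm_sub_eq_volume_Ico_add]
  have hswap := lintegral_prod_swap (μ := τ) (ν := σ) fun p => volume (Ico (f p.1) (f p.2))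
  simp only [Prod.fst_swap, Prod.snd_swap] at hswap
  rw [lintegral_add_left hIco, hswap, lintegral_volume_Ico_prod hf hf,
    lintegral_volume_Ico_prod hf hf, ← lintegral_add_left]
  have hIic (ν : Measure α) : Monotone fun t => ν {x | f x ≤ t} :=
    fun _ _ hst => measure_mono fun _ hx => le_trans hx hst
  have hIoi (ν : Measure α) : Antitone fun t => ν {x | t < f x} :=
    fun _ _ hst => measure_mono fun _ hx => lt_of_le_of_lt hst hx
  exact (hIic σ).measurable.mul (hIoi τ).measurable

lemma measure_setOf_le_add_measure_setOf_lt {α : Type*} [MeasurableSpace α] (ν : Measure α)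
    [IsProbabilityMeasure ν] {f : α → ℝ} (hf : Measurable f) (t : ℝ) :
    ν {x | f x ≤ t} + ν {x | t < f x} = 1 := by
  have := measure_add_measure_compl (μ := ν) (measurableSet_le hf (measurable_const (a := t)))
  simpa [compl_ofPred, not_le] using this

theorem lintegral_enorm_sub_comp_prod_add_le {α : Type*} [MeasurableSpace α] (σ τ : Measure α)
    [IsProbabilityMeasure σ] [IsProbabilityMeasure τ] {f : α → ℝ} (hf : Measurable f) :
    ∫⁻ p, ‖f p.1 - f p.2‖ₑ ∂(σ.prod σ) + ∫⁻ p, ‖f p.1 - f p.2‖ₑ ∂(τ.prod τ)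
      ≤ 2 * ∫⁻ p, ‖f p.1 - f p.2‖ₑ ∂(σ.prod τ) := by
  simp_rw [lintegral_enorm_sub_comp_prod hf]
  calc _ ≤ ∫⁻ t, σ {x | f x ≤ t} * σ {x | t < f x} + σ {x | f x ≤ t} * σ {x | t < f x}
          + (τ {x | f x ≤ t} * τ {x | t < f x} + τ {x | f x ≤ t} * τ {x | t < f x}) :=
        le_lintegral_add _ _
    _ ≤ ∫⁻ t, 2 * (σ {x | f x ≤ t} * τ {x | t < f x} + τ {x | f x ≤ t} * σ {x | t < f x}) :=
        lintegral_mono fun t =>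
          mul_add_mul_le_two_mul_of_add_eq_one (measure_setOf_le_add_measure_setOf_lt σ hf t)
            (measure_setOf_le_add_measure_setOf_lt τ hf t)
    _ = _ := lintegral_const_mul' _ _ ENNReal.ofNat_ne_top

theorem lintegral_prod_self_add_le_of_eq_lintegral_enorm_sub {α ι : Type*} [MeasurableSpace α]
    [MeasurableSpace ι] (γ : Measure ι) [SFinite γ] {f : ι → α → ℝ}
    (hf : Measurable (Function.uncurry f)) {D : α → α → ℝ≥0∞}
    (hD : ∀ x y, D x y = ∫⁻ u, ‖f u x - f u y‖ₑ ∂γ) (σ τ : Measure α)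
    [IsProbabilityMeasure σ] [IsProbabilityMeasure τ] :
    ∫⁻ p, D p.1 p.2 ∂(σ.prod σ) + ∫⁻ p, D p.1 p.2 ∂(τ.prod τ)
      ≤ 2 * ∫⁻ p, D p.1 p.2 ∂(σ.prod τ) := by
  have hswap (ν ν' : Measure α) [SFinite ν] [SFinite ν'] :
      ∫⁻ p, D p.1 p.2 ∂(ν.prod ν') = ∫⁻ u, ∫⁻ p, ‖f u p.1 - f u p.2‖ₑ ∂(ν.prod ν') ∂γ := by
    simp_rw [hD]
    refine lintegral_lintegral_swap (Measurable.aemeasurable ?_)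
    exact ((hf.comp (measurable_snd.prodMk measurable_fst.fst)).sub
      (hf.comp (measurable_snd.prodMk measurable_fst.snd))).enorm
  rw [hswap, hswap, hswap]
  calc _ ≤ ∫⁻ u, ∫⁻ p, ‖f u p.1 - f u p.2‖ₑ ∂(σ.prod σ)
          + ∫⁻ p, ‖f u p.1 - f u p.2‖ₑ ∂(τ.prod τ) ∂γ := le_lintegral_add _ _
    _ ≤ ∫⁻ u, 2 * ∫⁻ p, ‖f u p.1 - f u p.2‖ₑ ∂(σ.prod τ) ∂γ := lintegral_mono fun u =>
        lintegral_enorm_sub_comp_prod_add_le σ τ (hf.comp measurable_prodMk_left)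
    _ = _ := lintegral_const_mul' _ _ ENNReal.ofNat_ne_top

section InnerProductSpace

variable {E : Type*} [NormedAddCommGroup E] [InnerProductSpace ℝ E]

lemma exists_linearIsometryEquiv_norm_smul_eq {w : E} (hw : ‖w‖ = 1) (v : E) :
    ∃ e : E ≃ₗᵢ[ℝ] E, ‖v‖ • e w = v := by
  rcases eq_or_ne v 0 with rfl | hv
  · exact ⟨LinearIsometryEquiv.refl ℝ E, by simp⟩
  · have hnorm : ‖w‖ = ‖‖v‖⁻¹ • v‖ := by
      rw [hw, norm_smul, norm_inv, norm_norm, inv_mul_cancel₀ (norm_ne_zero_iff.2 hv)]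
    refine ⟨(ℝ ∙ (w - ‖v‖⁻¹ • v))ᗮ.reflection, ?_⟩
    rw [Submodule.reflection_sub hnorm, smul_inv_smul₀ (norm_ne_zero_iff.2 hv)]

variable [MeasurableSpace E] [BorelSpace E]

lemma lintegral_enorm_inner_eq_mul_enorm {γ : Measure E}
    (hγ : ∀ e : E ≃ₗᵢ[ℝ] E, MeasurePreserving e γ γ) {w : E} (hw : ‖w‖ = 1) (v : E) :
    ∫⁻ u, ‖⟪u, v⟫‖ₑ ∂γ = (∫⁻ u, ‖⟪u, w⟫‖ₑ ∂γ) * ‖v‖ₑ := by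
  obtain ⟨e, he⟩ := exists_linearIsometryEquiv_norm_smul_eq hw v
  have hinner (u : E) : ⟪u, v⟫ = ‖v‖ * ⟪e.symm u, w⟫ := by
    conv_lhs => rw [← he]
    rw [real_inner_smul_right, ← e.inner_map_map (e.symm u) w, e.apply_symm_apply]
  calc ∫⁻ u, ‖⟪u, v⟫‖ₑ ∂γ = ∫⁻ u, ‖⟪e.symm u, w⟫‖ₑ * ‖v‖ₑ ∂γ := by
        simp_rw [hinner, enorm_mul, enorm_norm, mul_comm]
    _ = (∫⁻ u, ‖⟪e.symm u, w⟫‖ₑ ∂γ) * ‖v‖ₑ := lintegral_mul_const' _ _ enorm_ne_top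
    _ = (∫⁻ u, ‖⟪u, w⟫‖ₑ ∂γ) * ‖v‖ₑ := by
        rw [(hγ e.symm).lintegral_comp (f := fun u => ‖⟪u, w⟫‖ₑ)
          (continuous_id.inner continuous_const).measurable.enorm]

variable [FiniteDimensional ℝ E]

lemma LinearIsometryEquiv.measurePreserving_restrict_ball (e : E ≃ₗᵢ[ℝ] E) :
    MeasurePreserving e (volume.restrict (Metric.ball 0 1))
      (volume.restrict (Metric.ball 0 1)) := by
  simpa using e.measurePreserving.restrict_preimage
    (Metric.isOpen_ball (x := (0 : E)) (ε := 1)).measurableSet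

lemma setLIntegral_ball_enorm_inner_ne_top (w : E) :
    ∫⁻ u in Metric.ball 0 1, ‖⟪u, w⟫‖ₑ ≠ ∞ := by
  refine ne_top_of_le_ne_top (b := ∫⁻ _ in Metric.ball (0 : E) 1, ‖w‖ₑ) ?_ ?_
  · rw [setLIntegral_const]
    exact ENNReal.mul_ne_top enorm_ne_top measure_ball_lt_top.ne
  · refine setLIntegral_mono' Metric.isOpen_ball.measurableSet fun u hu => ?_
    rw [enorm_le_iff_norm_le]
    calc ‖⟪u, w⟫‖ ≤ ‖u‖ * ‖w‖ := norm_inner_le_norm u w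
      _ ≤ ‖w‖ := mul_le_of_le_one_left (norm_nonneg w) (mem_ball_zero_iff.1 hu).le

lemma setLIntegral_ball_enorm_inner_ne_zero {w : E} (hw : w ≠ 0) :
    ∫⁻ u in Metric.ball 0 1, ‖⟪u, w⟫‖ₑ ≠ 0 := by
  refine ((setLIntegral_pos_iff (continuous_id.inner continuous_const).measurable.enorm).2 ?_).ne'
  have hopen : IsOpen (Function.support (fun u : E => ‖⟪u, w⟫‖ₑ) ∩ Metric.ball 0 1) :=
    (isOpen_ne_fun (continuous_id.inner continuous_const).enorm continuous_const).inter
      Metric.isOpen_ball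
  have hw' : 0 < ‖w‖ := norm_pos_iff.2 hw
  refine hopen.measure_pos volume ⟨(2 * ‖w‖)⁻¹ • w, ?_, ?_⟩
  · rw [Function.mem_support, enorm_ne_zero, real_inner_smul_left, real_inner_self_eq_norm_sq]
    positivity
  · rw [mem_ball_zero_iff, norm_smul, norm_inv, Real.norm_of_nonneg (by positivity),
      mul_inv, mul_assoc, inv_mul_cancel₀ hw'.ne']
    norm_num

theorem lintegral_enorm_sub_prod_self_add_le (σ τ : Measure E)
    [IsProbabilityMeasure σ] [IsProbabilityMeasure τ] :
    ∫⁻ p, ‖p.1 - p.2‖ₑ ∂(σ.prod σ) + ∫⁻ p, ‖p.1 - p.2‖ₑ ∂(τ.prod τ)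
      ≤ 2 * ∫⁻ p, ‖p.1 - p.2‖ₑ ∂(σ.prod τ) := by
  rcases subsingleton_or_nontrivial E with hE | hE
  · simp [Subsingleton.elim _ (0 : E)]
  obtain ⟨w, hw⟩ := exists_norm_eq E zero_le_one
  set c := ∫⁻ u in Metric.ball 0 1, ‖⟪u, w⟫‖ₑ
  have hc : c ≠ ∞ := setLIntegral_ball_enorm_inner_ne_top w
  have hmix := lintegral_prod_self_add_le_of_eq_lintegral_enorm_sub
    (volume.restrict (Metric.ball (0 : E) 1)) (f := fun u x => ⟪u, x⟫)
    continuous_inner.measurable (D := fun x y => c * ‖x - y‖ₑ) (fun x y => by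
      simp only [← inner_sub_right]
      rw [lintegral_enorm_inner_eq_mul_enorm
        LinearIsometryEquiv.measurePreserving_restrict_ball hw, mul_comm]) σ τ
  simp only [lintegral_const_mul' c _ hc] at hmix
  rw [← mul_add, mul_left_comm] at hmix
  exact (ENNReal.mul_le_mul_iff_right
    (setLIntegral_ball_enorm_inner_ne_zero (norm_ne_zero_iff.1 (hw ▸ one_ne_zero))) hc).1 hmix

end InnerProductSpace

section Probability

variable {Ω E : Type*} [MeasurableSpace Ω] {μ : Measure Ω} [NormedAddCommGroup E]
  [MeasurableSpace E] [BorelSpace E]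

lemma lintegral_enorm_sub_eq_of_indepFun [SecondCountableTopology E] [IsFiniteMeasure μ]
    {V W : Ω → E} (hVW : IndepFun V W μ) (hV : AEMeasurable V μ) (hW : AEMeasurable W μ) :
    ∫⁻ ω, ‖V ω - W ω‖ₑ ∂μ = ∫⁻ p, ‖p.1 - p.2‖ₑ ∂((μ.map V).prod (μ.map W)) := by
  rw [← hVW.map_prod_eq_prod_map_map hV hW,
    lintegral_map' (f := fun p : E × E => ‖p.1 - p.2‖ₑ)
      (continuous_fst.sub continuous_snd).enorm.aemeasurable (hV.prodMk hW)]

theorem lintegral_enorm_sub_add_le_of_indepFun [InnerProductSpace ℝ E] [FiniteDimensional ℝ E]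
    [IsProbabilityMeasure μ] {X X' Y Y' : Ω → E}
    (hXX' : IdentDistrib X X' μ μ) (hYY' : IdentDistrib Y Y' μ μ) (hXX'i : IndepFun X X' μ)
    (hYY'i : IndepFun Y Y' μ) (hXY : IndepFun X Y μ) :
    ∫⁻ ω, ‖X ω - X' ω‖ₑ ∂μ + ∫⁻ ω, ‖Y ω - Y' ω‖ₑ ∂μ ≤ 2 * ∫⁻ ω, ‖X ω - Y ω‖ₑ ∂μ := by
  have := Measure.isProbabilityMeasure_map (μ := μ) hXX'.aemeasurable_fst
  have := Measure.isProbabilityMeasure_map (μ := μ) hYY'.aemeasurable_fst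
  rw [lintegral_enorm_sub_eq_of_indepFun hXX'i hXX'.aemeasurable_fst hXX'.aemeasurable_snd,
    lintegral_enorm_sub_eq_of_indepFun hYY'i hYY'.aemeasurable_fst hYY'.aemeasurable_snd,
    lintegral_enorm_sub_eq_of_indepFun hXY hXX'.aemeasurable_fst hYY'.aemeasurable_fst,
    ← hXX'.map_eq, ← hYY'.map_eq]
  exact lintegral_enorm_sub_prod_self_add_le _ _

end Probability

lemma ENNReal.toReal_add_toReal_le_of_add_le {a b c : ℝ≥0∞} (h : a + b ≤ c) (hc : c ≠ ∞) :
    a.toReal + b.toReal ≤ c.toReal := by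
  have hab := ne_top_of_le_ne_top hc h
  rw [← ENNReal.toReal_add (ENNReal.add_ne_top.1 hab).1 (ENNReal.add_ne_top.1 hab).2]
  exact ENNReal.toReal_mono hc h

theorem energy_distance_nonneg_general
    {Ω : Type*} [MeasurableSpace Ω] (μ : Measure Ω) [IsProbabilityMeasure μ]
    (d : ℕ) (X X' Y Y' : Ω → EuclideanSpace ℝ (Fin d))
    (hindep : iIndepFun ![X, X', Y, Y'] μ)
    (hXX' : IdentDistrib X X' μ μ) (hYY' : IdentDistrib Y Y' μ μ)
    (hXint : Integrable (fun ω => ‖X ω‖) μ)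
    (hYint : Integrable (fun ω => ‖Y ω‖) μ) :
    0 ≤ 2 * (μ[fun ω => ‖X ω - Y ω‖]) - (μ[fun ω => ‖X ω - X' ω‖])
        - (μ[fun ω => ‖Y ω - Y' ω‖]) := by
  have hkey := lintegral_enorm_sub_add_le_of_indepFun hXX' hYY'
    (by simpa using hindep.indepFun (show (0 : Fin 4) ≠ 1 by decide))
    (by simpa using hindep.indepFun (show (2 : Fin 4) ≠ 3 by decide))
    (by simpa using hindep.indepFun (show (0 : Fin 4) ≠ 2 by decide))
  have hfin : ∫⁻ ω, ‖X ω - Y ω‖ₑ ∂μ ≠ ∞ :=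
    (((integrable_norm_iff hXX'.aemeasurable_fst.aestronglyMeasurable).1 hXint).sub
      ((integrable_norm_iff hYY'.aemeasurable_fst.aestronglyMeasurable).1
        hYint)).hasFiniteIntegral.ne
  have hreal := ENNReal.toReal_add_toReal_le_of_add_le hkey
    (ENNReal.mul_ne_top ENNReal.ofNat_ne_top hfin)
  have hmean {V W : Ω → EuclideanSpace ℝ (Fin d)} (hV : AEMeasurable V μ)
      (hW : AEMeasurable W μ) : μ[fun ω => ‖V ω - W ω‖] = (∫⁻ ω, ‖V ω - W ω‖ₑ ∂μ).toReal :=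
    integral_norm_eq_lintegral_enorm (f := fun ω => V ω - W ω) (hV.sub hW).aestronglyMeasurable
  rw [ENNReal.toReal_mul, ENNReal.toReal_ofNat] at hreal
  rw [hmean hXX'.aemeasurable_fst hYY'.aemeasurable_fst,
    hmean hXX'.aemeasurable_fst hXX'.aemeasurable_snd,
    hmean hYY'.aemeasurable_fst hYY'.aemeasurable_snd]
  linarith

/-- Nonnegativity of the energy distance:
`2 E‖X−Y‖ − E‖X−X'‖ − E‖Y−Y'‖ ≥ 0` for mutually independent `X, X', Y, Y'`
with `X, X'` i.i.d. and `Y, Y'` i.i.d., having finite first moments. -/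
theorem energy_distance_nonneg
    {Ω : Type*} [MeasurableSpace Ω] (μ : Measure Ω) [IsProbabilityMeasure μ]
    (d : ℕ) (X X' Y Y' : Ω → EuclideanSpace ℝ (Fin d))
    (hindep : iIndepFun ![X, X', Y, Y'] μ)
    (hXX' : IdentDistrib X X' μ μ) (hYY' : IdentDistrib Y Y' μ μ)
    (hXmeas : Measurable X) (hX'meas : Measurable X')
    (hYmeas : Measurable Y) (hY'meas : Measurable Y')
    (hXint : Integrable (fun ω => ‖X ω‖) μ)
    (hYint : Integrable (fun ω => ‖Y ω‖) μ) :
    0 ≤ 2 * (μ[fun ω => ‖X ω - Y ω‖]) - (μ[fun ω => ‖X ω - X' ω‖])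
        - (μ[fun ω => ‖Y ω - Y' ω‖]) :=
  energy_distance_nonneg_general μ d X X' Y Y' hindep hXX' hYY' hXint hYint
end

section
/- The weighted V-statistic estimator Γ_n(ρ) = Σ_{1≤k<l≤K} p̂_k p̂_l Γ̂_{kl}(ρ) equals the direct V-statistic estimator G_n(ρ) = (1−ρ)·n^{-2} Σ_{i,j=1}^n ‖X_i − X_j‖ − Σ_{k=1}^K p̂_k n_k^{-2} Σ_{i,j=1}^{n_k} ‖X_i^{(k)} − X_j^{(k)}‖, where Γ̂_{kl}(ρ) = 2(1−ρ)(n_k n_l)^{-1} Σ_{i,j} ‖X_i^{(k)} − X_j^{(l)}‖ − (1 + ρ p̂_k/(1−p̂_k)) n_k^{-2} Σ_{i_1,i_2} ‖X_{i_1}^{(k)} − X_{i_2}^{(k)}‖ − (1 + ρ p̂_l/(1−p̂_l)) n_l^{-2} Σ_{j_1,j_2} ‖X_{j_1}^{(l)} − X_{j_2}^{(l)}‖, with p̂_k = n_k/n. -/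
/-!
Both estimators are linear in the symmetric matrix of between-group distance sums. Summing a
symmetric array over the pairs `k < l` gives half of the full double sum minus the diagonal. In the
full double sum the within-group terms collapse because `∑ l, p̂ₗ = 1`; on the diagonal, the
correction factor satisfies `(1 + ρ p̂/(1 - p̂)) (1 - p̂) = 1 - (1 - ρ) p̂`, which turns the remaining
within-group terms into exactly those of `Gₙ(ρ)`.
-/

open Finset

theorem Finset.two_nsmul_sum_filter_lt_add_sum_diag {ι M : Type*} [Fintype ι] [LinearOrder ι]
    [AddCommMonoid M] (f : ι → ι → M) (hf : ∀ k l, f k l = f l k) :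
    2 • ∑ q ∈ univ.filter (fun q : ι × ι => q.1 < q.2), f q.1 q.2 + ∑ k, f k k
      = ∑ k, ∑ l, f k l := by
  have hsplit : ∀ k l, f k l = (if k < l then f k l else 0) + (if l < k then f l k else 0)
      + (if k = l then f k l else 0) := by
    intro k l
    rcases lt_trichotomy k l with h | rfl | h
    · simp [h, h.not_gt, h.ne]
    · simp
    · simp [h, h.not_gt, h.ne', hf k l]
  have hupper : ∑ q ∈ univ.filter (fun q : ι × ι => q.1 < q.2), f q.1 q.2
      = ∑ k, ∑ l, if k < l then f k l else 0 := by
    rw [sum_filter, Fintype.sum_prod_type]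
  have hlower : ∑ q ∈ univ.filter (fun q : ι × ι => q.1 < q.2), f q.1 q.2
      = ∑ k, ∑ l, if l < k then f l k else 0 := by
    rw [hupper, sum_comm]
  calc _ = (∑ k, ∑ l, if k < l then f k l else 0) + (∑ k, ∑ l, if l < k then f l k else 0)
        + ∑ k, ∑ l, if k = l then f k l else 0 := by
          rw [two_nsmul]; nth_rw 1 [hupper]; rw [hlower]; simp
    _ = ∑ k, ∑ l, f k l := by
      simp only [← sum_add_distrib, ← hsplit]

theorem Finset.sum_sum_mul_mul_sub_sub {ι R : Type*} [Fintype ι] [CommRing R] (p v : ι → R)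
    (g : ι → ι → R) (hp : ∑ k, p k = 1) :
    ∑ k, ∑ l, p k * p l * (g k l - v k - v l)
      = ∑ k, ∑ l, p k * p l * g k l - 2 * ∑ k, p k * v k := by
  have hfirst : ∑ k, ∑ l, p k * p l * v k = ∑ k, p k * v k :=
    sum_congr rfl fun k _ => by rw [← sum_mul, ← mul_sum, hp, mul_one]
  have hsecond : ∑ k, ∑ l, p k * p l * v l = ∑ l, p l * v l := by
    rw [sum_comm]
    exact sum_congr rfl fun l _ => by rw [← sum_mul, ← sum_mul, hp, one_mul]
  simp only [mul_sub, sum_sub_distrib, hfirst, hsecond]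
  ring

theorem sum_sum_norm_sub_comm {α β E : Type*} [Fintype α] [Fintype β]
    [SeminormedAddGroup E] (x : α → E) (y : β → E) :
    ∑ i, ∑ j, ‖x i - y j‖ = ∑ j, ∑ i, ‖y j - x i‖ := by
  rw [sum_comm]
  simp only [norm_sub_rev]

theorem lt_sum_univ_of_forall_pos {ι : Type*} [Fintype ι] [Nontrivial ι] (m : ι → ℕ)
    (hm : ∀ k, 0 < m k) (k : ι) : m k < ∑ l, m l := by
  obtain ⟨j, hj⟩ := exists_ne k
  exact single_lt_sum hj (mem_univ k) (mem_univ j) (hm j) fun l _ _ => Nat.zero_le _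

/-- `A k l` stands for the between-group distance sum, `S k l` for `1 / (n_k n_l)` and `t` for
`1 / n ^ 2`. -/
theorem weighted_pair_sum_eq_direct {ι : Type*} [Fintype ι] [LinearOrder ι] (ρ t : ℝ)
    (p : ι → ℝ) (S A : ι → ι → ℝ) (hp : ∑ k, p k = 1) (hp1 : ∀ k, p k ≠ 1)
    (hS : ∀ k l, p k * p l * S k l = t) (hA : ∀ k l, A k l = A l k) :
    ∑ q ∈ univ.filter (fun q : ι × ι => q.1 < q.2), p q.1 * p q.2 *
      (2 * (1 - ρ) * S q.1 q.2 * A q.1 q.2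
        - (1 + ρ * p q.1 / (1 - p q.1)) * S q.1 q.1 * A q.1 q.1
        - (1 + ρ * p q.2 / (1 - p q.2)) * S q.2 q.2 * A q.2 q.2)
      = (1 - ρ) * t * ∑ k, ∑ l, A k l - ∑ k, p k * S k k * A k k := by
  set c : ι → ℝ := fun k => 1 + ρ * p k / (1 - p k)
  set F : ι → ι → ℝ := fun k l =>
    p k * p l * (2 * (1 - ρ) * S k l * A k l - c k * S k k * A k k - c l * S l l * A l l)
  have hcross : ∀ k l, p k * p l * (2 * (1 - ρ) * S k l * A k l) = 2 * (1 - ρ) * t * A k l :=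
    fun k l => by rw [← hS k l]; ring
  have hpairs := two_nsmul_sum_filter_lt_add_sum_diag F fun k l => by
    linear_combination hcross k l - hcross l k + 2 * (1 - ρ) * t * hA k l
  have hfull : ∑ k, ∑ l, F k l
      = 2 * (1 - ρ) * t * ∑ k, ∑ l, A k l - 2 * ∑ k, p k * (c k * S k k * A k k) := by
    simp only [F, sum_sum_mul_mul_sub_sub _ _ _ hp, hcross, mul_sum]
  have hc : ∀ k, c k * (1 - p k) = 1 - (1 - ρ) * p k := fun k => by
    have : 1 - p k ≠ 0 := sub_ne_zero.mpr (hp1 k).symm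
    simp only [c]; field_simp; ring
  have hdiag : 2 * ∑ k, p k * (c k * S k k * A k k) + ∑ k, F k k
      = 2 * ∑ k, p k * S k k * A k k := by
    rw [mul_sum, mul_sum, ← sum_add_distrib]
    exact sum_congr rfl fun k _ => by linear_combination (2 * p k * S k k * A k k) * hc k
  rw [two_nsmul] at hpairs
  linarith

/-- The pairwise-weighted V-statistic estimator `Γₙ(ρ)` equals the direct
V-statistic estimator `Gₙ(ρ)` of the categorical Gini covariance equation. -/
theorem weighted_v_statistic_eq_direct
    (d K : ℕ) (hK : 2 ≤ K) (m : Fin K → ℕ) (hm : ∀ k, 1 ≤ m k)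
    (n : ℕ) (hn : n = ∑ k, m k)
    (X : (k : Fin K) → Fin (m k) → EuclideanSpace ℝ (Fin d))
    (ρ : ℝ) (phat : Fin K → ℝ) (hphat : ∀ k, phat k = (m k : ℝ) / n)
    (Γhat : Fin K → Fin K → ℝ)
    (hΓhat : ∀ k l, Γhat k l =
      2 * (1 - ρ) * (1 / ((m k : ℝ) * (m l : ℝ))) *
        (∑ i : Fin (m k), ∑ j : Fin (m l), ‖X k i - X l j‖)
      - (1 + ρ * phat k / (1 - phat k)) * (1 / ((m k : ℝ) ^ 2)) *
        (∑ i : Fin (m k), ∑ j : Fin (m k), ‖X k i - X k j‖)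
      - (1 + ρ * phat l / (1 - phat l)) * (1 / ((m l : ℝ) ^ 2)) *
        (∑ i : Fin (m l), ∑ j : Fin (m l), ‖X l i - X l j‖))
    (Γ G : ℝ)
    (hΓ : Γ = ∑ q ∈ univ.filter (fun q : Fin K × Fin K => q.1 < q.2),
      phat q.1 * phat q.2 * Γhat q.1 q.2)
    (hG : G = (1 - ρ) * (1 / ((n : ℝ) ^ 2)) *
        (∑ k, ∑ l, ∑ i : Fin (m k), ∑ j : Fin (m l), ‖X k i - X l j‖)
      - ∑ k, phat k * (1 / ((m k : ℝ) ^ 2)) *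
        (∑ i : Fin (m k), ∑ j : Fin (m k), ‖X k i - X k j‖)) :
    Γ = G := by
  have : Nontrivial (Fin K) := Fin.nontrivial_iff_two_le.mpr hK
  have hlt : ∀ k, m k < n := hn ▸ lt_sum_univ_of_forall_pos m hm
  have hn0 : (n : ℝ) ≠ 0 := by
    exact_mod_cast ((Nat.zero_le _).trans_lt (hlt ⟨0, by omega⟩)).ne'
  have hsum : ∑ k, phat k = 1 := by
    simp only [hphat, ← sum_div, ← Nat.cast_sum, ← hn, div_self hn0]
  have hne : ∀ k, phat k ≠ 1 := fun k => by
    rw [hphat, ne_eq, div_eq_one_iff_eq hn0]; exact_mod_cast (hlt k).ne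
  have hweight : ∀ k l, phat k * phat l * (1 / ((m k : ℝ) * m l)) = 1 / ((n : ℝ) * n) := by
    intro k l
    have := hm k; have := hm l
    rw [hphat, hphat]; field_simp
  rw [hΓ, hG]
  simp only [hΓhat, sq]
  exact weighted_pair_sum_eq_direct ρ _ phat _ (fun k l => ∑ i, ∑ j, ‖X k i - X l j‖) hsum hne
    hweight fun k l => sum_sum_norm_sub_comm (X k) (X l)
end
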